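/- arXiv:2408.00308 — 4 statements merged into one kernel-verified Lean document; each statement's English description precedes it below -/
import Mathlib

section
/- Let S be a repeated suffix of T that is not the longest repeated suffix, and suppose every occurrence of S except the suffix occurrence is followed by the same character (i.e., there is a single character c with T[i+|S|] = c for all occurrences i < n−|S|+1 of S). Then the net frequency of S is zero. -/
variable {α : Type*} [DecidableEq α]

/-- Number of occurrences of `S` as a substring of `T`. -/
def occ (T S : List α) : ℕ :=
  ((Finset.range T.length).filter (fun i => S <+: T.drop i)).card

/-- Net occurrence (with boundary conventions at the ends of the text). -/
def IsNetOcc (T S : List α) (i : ℕ) : Prop :=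
  S <+: T.drop i ∧ i + S.length ≤ T.length ∧ 2 ≤ occ T S ∧
    (i = 0 ∨ occ T ((T.drop (i - 1)).take (S.length + 1)) = 1) ∧
    (i + S.length = T.length ∨ occ T ((T.drop i).take (S.length + 1)) = 1)

instance (T S : List α) : DecidablePred (IsNetOcc T S) := fun i => by
  unfold IsNetOcc; infer_instance

/-- Net frequency: the number of net occurrences of `S` in `T`. -/
def netFreq (T S : List α) : ℕ :=
  ((Finset.range T.length).filter (IsNetOcc T S)).card

/-!
Suppose `i` were a net occurrence of `S`. Let `a :: S` be the suffix of `T` of length `|S| + 1`;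
it is a suffix of the longer repeated suffix `S'`, hence itself repeated. If `i` is the suffix
occurrence, its left extension is `a :: S`, so it is not unique. Otherwise its right extension is
`S ++ [c]`, which must then occur only once; but every occurrence of `S'` not at the end of `T`
contains an occurrence of `S` followed by `c`, and at most one occurrence of `S'` is at the end,
so some occurrence of `S'` ends at `i + |S|`. Then `a :: S` occurs at `i - 1`, and again the left
extension of `i` is repeated.
-/

theorem List.prefix_drop_add_length {β : Type*} {T X A : List β} {j : ℕ}
    (h : X ++ A <+: T.drop j) : A <+: T.drop (j + X.length) := by
  obtain ⟨Z, hZ⟩ := h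
  exact ⟨Z, by rw [← List.drop_drop, ← hZ, List.append_assoc, List.drop_left]⟩

theorem List.add_length_le_of_prefix_drop {β : Type*} {T P : List β} {j : ℕ} (hP : P ≠ [])
    (h : P <+: T.drop j) : j + P.length ≤ T.length := by
  have hlen := h.length_le
  have hpos := List.length_pos_iff.mpr hP
  rw [List.length_drop] at hlen
  omega

theorem List.prefix_drop_concat {β : Type*} {T S : List β} {j : ℕ} {c : β}
    (h : S <+: T.drop j) (hc : T[j + S.length]? = some c) : S ++ [c] <+: T.drop j := by
  obtain ⟨Z, hZ⟩ := h
  obtain ⟨hlt, hget⟩ := List.getElem?_eq_some_iff.mp hc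
  have hZ' : Z = c :: T.drop (j + S.length + 1) := by
    rw [← List.drop_left (l₁ := S) (l₂ := Z), hZ, List.drop_drop, List.drop_eq_getElem_cons hlt,
      hget]
  exact ⟨T.drop (j + S.length + 1), by rw [← hZ, hZ']; simp⟩

theorem List.exists_eq_succ_prefix_drop_of_cons_suffix {β : Type*} {T S : List β} {a : β}
    {i : ℕ} (hL : a :: S <:+ T) (hi : i + S.length = T.length) :
    ∃ k, i = k + 1 ∧ a :: S <+: T.drop k := by
  have hlen : S.length + 1 ≤ T.length := by simpa using hL.length_le
  refine ⟨T.length - (S.length + 1), by omega, ?_⟩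
  rw [List.suffix_iff_eq_drop.mp hL]
  simp

def occurrences (T S : List α) : Finset ℕ :=
  (Finset.range T.length).filter (fun i => S <+: T.drop i)

theorem occ_eq_card_occurrences (T S : List α) : occ T S = (occurrences T S).card := rfl

theorem mem_occurrences {T S : List α} {i : ℕ} :
    i ∈ occurrences T S ↔ i < T.length ∧ S <+: T.drop i := by
  rw [occurrences, Finset.mem_filter, Finset.mem_range]

theorem mem_occurrences_of_prefix_drop {T S : List α} {i : ℕ} (hS : S ≠ [])
    (h : S <+: T.drop i) : i ∈ occurrences T S := by
  have := List.add_length_le_of_prefix_drop hS h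
  have := List.length_pos_iff.mpr hS
  exact mem_occurrences.mpr ⟨by omega, h⟩

theorem add_length_le_of_mem_occurrences {T S : List α} {i : ℕ} (h : i ∈ occurrences T S) :
    i + S.length ≤ T.length := by
  obtain ⟨hi, hS⟩ := mem_occurrences.mp h
  have := hS.length_le
  rw [List.length_drop] at this
  omega

theorem eq_of_occ_eq_one {T P : List α} {i j : ℕ} (hP : P ≠ []) (huniq : occ T P = 1)
    (hi : P <+: T.drop i) (hj : P <+: T.drop j) : i = j :=
  Finset.card_le_one.mp huniq.le i (mem_occurrences_of_prefix_drop hP hi) j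
    (mem_occurrences_of_prefix_drop hP hj)

theorem occ_le_occ_of_infix {T A B : List α} (h : A <:+: B) : occ T B ≤ occ T A := by
  rcases eq_or_ne A [] with rfl | hA
  · have hall : occurrences T [] = Finset.range T.length := by
      rw [occurrences]
      exact Finset.filter_true_of_mem fun _ _ => List.nil_prefix
    rw [occ_eq_card_occurrences, occ_eq_card_occurrences, hall]
    exact Finset.card_le_card (Finset.filter_subset _ _)
  obtain ⟨X, Y, rfl⟩ := h
  refine Finset.card_le_card_of_injOn (· + X.length) (fun j hj => ?_)
    (fun _ _ _ _ h => by simpa using h)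
  have hXA : X ++ A <+: T.drop j :=
    (List.prefix_append _ Y).trans (mem_occurrences.mp hj).2
  exact mem_occurrences_of_prefix_drop hA (List.prefix_drop_add_length hXA)

theorem exists_prefix_drop_of_occ_concat_eq_one {T S X : List α} {c : α} {i : ℕ}
    (hc : ∀ k, S <+: T.drop k → k + S.length < T.length → T[k + S.length]? = some c)
    (hi : S ++ [c] <+: T.drop i) (huniq : occ T (S ++ [c]) = 1) (hX : 2 ≤ occ T (X ++ S)) :
    ∃ j, X ++ S <+: T.drop j ∧ i = j + X.length := by
  have hnonfinal : ∀ j, X ++ S <+: T.drop j → j + (X ++ S).length < T.length →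
      i = j + X.length := by
    intro j hj hlt
    have hS := List.prefix_drop_add_length hj
    have hSc := List.prefix_drop_concat hS (hc _ hS (by rw [List.length_append] at hlt; omega))
    exact eq_of_occ_eq_one (by simp) huniq hi hSc
  obtain ⟨j₁, hj₁, j₂, hj₂, hne⟩ := Finset.one_lt_card.mp (occ_eq_card_occurrences T _ ▸ hX)
  have hle₁ := add_length_le_of_mem_occurrences hj₁
  have hle₂ := add_length_le_of_mem_occurrences hj₂
  replace hj₁ := (mem_occurrences.mp hj₁).2
  replace hj₂ := (mem_occurrences.mp hj₂).2
  rcases hle₁.lt_or_eq with hlt₁ | heq₁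
  · exact ⟨j₁, hj₁, hnonfinal j₁ hj₁ hlt₁⟩
  rcases hle₂.lt_or_eq with hlt₂ | heq₂
  · exact ⟨j₂, hj₂, hnonfinal j₂ hj₂ hlt₂⟩
  omega

theorem not_isNetOcc_succ_of_prefix_drop {T S L : List α} {k : ℕ} (hk : L <+: T.drop k)
    (hL : L.length = S.length + 1) (hLrep : 2 ≤ occ T L) : ¬ IsNetOcc T S (k + 1) := by
  rintro ⟨-, -, -, hleft | hleft, -⟩
  · exact k.succ_ne_zero hleft
  · rw [Nat.add_sub_cancel, ← hL, ← List.prefix_iff_eq_take.mp hk] at hleft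
    omega

theorem netFreq_eq_zero_of_not_branching_repeated_suffix_general (T S : List α)
    (hsuf : S <:+ T)
    (hnotlongest : ∃ S' : List α, S' <:+ T ∧ S.length < S'.length ∧ 2 ≤ occ T S')
    (hsame : ∃ c : α, ∀ i, S <+: T.drop i → i + S.length < T.length →
      T[i + S.length]? = some c) :
    netFreq T S = 0 := by
  obtain ⟨S', hS'T, hlen, hS'rep⟩ := hnotlongest
  obtain ⟨c, hc⟩ := hsame
  obtain ⟨W, rfl⟩ := List.suffix_of_suffix_length_le hsuf hS'T hlen.le
  obtain ⟨U, a, rfl⟩ : ∃ U a, W = U ++ [a] :=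
    (W.eq_nil_or_concat').resolve_left (by rintro rfl; simp at hlen)
  have hLrep : 2 ≤ occ T (a :: S) :=
    hS'rep.trans (occ_le_occ_of_infix ⟨U, [], by simp⟩)
  rw [netFreq, Finset.card_eq_zero, Finset.filter_eq_empty_iff]
  rintro i - hi
  obtain ⟨k, rfl, hk⟩ : ∃ k, i = k + 1 ∧ a :: S <+: T.drop k := by
    obtain ⟨hS, hle, -, -, hright⟩ := hi
    rcases hle.lt_or_eq with hlt | hend
    · have hSc := List.prefix_drop_concat hS (hc i hS hlt)
      have htake := List.prefix_iff_eq_take.mp hSc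
      rw [List.length_append, List.length_singleton] at htake
      have huniq : occ T (S ++ [c]) = 1 := htake ▸ hright.resolve_left hlt.ne
      obtain ⟨j, hj, rfl⟩ :=
        exists_prefix_drop_of_occ_concat_eq_one hc hSc huniq hS'rep
      refine ⟨j + U.length, by simp [Nat.add_assoc], List.prefix_drop_add_length (by simpa using hj)⟩
    · exact List.exists_eq_succ_prefix_drop_of_cons_suffix
        ((List.suffix_append U _).trans (by simpa using hS'T)) hend
  exact not_isNetOcc_succ_of_prefix_drop hk (by simp) hLrep hi

/-- Let `S` be a repeated suffix of `T` that is not the longest repeated suffix, and suppose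
every occurrence of `S` except the suffix occurrence is followed by the same character `c`.
Then the net frequency of `S` is zero. -/
theorem netFreq_eq_zero_of_not_branching_repeated_suffix (T S : List α)
    (hsuf : S <:+ T) (hrep : 2 ≤ occ T S)
    (hnotlongest : ∃ S' : List α, S' <:+ T ∧ S.length < S'.length ∧ 2 ≤ occ T S')
    (hsame : ∃ c : α, ∀ i, S <+: T.drop i → i + S.length < T.length →
      T[i + S.length]? = some c) :
    netFreq T S = 0 :=
  netFreq_eq_zero_of_not_branching_repeated_suffix_general T S hsuf hnotlongest hsame
end

section
/- Let S and xS both be repeated suffixes of T (where xS is the left extension of S by character x). If xS is branching in T (is the longest common prefix of two distinct suffixes), then S is also branching in T. -/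
variable {α : Type*} [DecidableEq α]

/-- `P` is branching in `T`: there exist two occurrences of `P` followed by distinct
characters (equivalently, `P` is the longest common prefix of two distinct suffixes). -/
def Branching (T P : List α) : Prop :=
  ∃ y z : α, y ≠ z ∧ 1 ≤ occ T (P ++ [y]) ∧ 1 ≤ occ T (P ++ [z])

/-- If `S` and its left extension `xS` are both repeated suffixes of `T` and `xS` is
branching in `T`, then `S` is branching in `T`. -/
theorem branching_of_branching_left_ext (T S : List α) (x : α)
    (hS : S <:+ T) (hSrep : 2 ≤ occ T S)
    (hxS : (x :: S) <:+ T) (hxSrep : 2 ≤ occ T (x :: S))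
    (hb : Branching T (x :: S)) : Branching T S := by
  obtain ⟨y, z, hyz, hy, hz⟩ := hb
  have key : ∀ w : α, 1 ≤ occ T ((x :: S) ++ [w]) → 1 ≤ occ T (S ++ [w]) := by
    intro w hw
    unfold occ at hw ⊢; rw [Finset.one_le_card] at hw ⊢
    obtain ⟨i, hi⟩ := hw
    simp only [Finset.mem_filter, Finset.mem_range] at hi
    obtain ⟨hilt, hpref⟩ := hi
    refine ⟨i + 1, Finset.mem_filter.mpr ⟨Finset.mem_range.mpr ?_, ?_⟩⟩
    · have hlen := hpref.length_le
      simp [List.length_drop] at hlen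
      omega
    · obtain ⟨t, ht⟩ := hpref
      have : T.drop (i + 1) = (T.drop i).drop 1 := by
        rw [List.drop_drop]
      rw [this, ← ht]
      exact ⟨t, by simp⟩
  exact ⟨y, z, hyz, key y hy, key z hz⟩
end

section
/- In the suffix tree of T (with sentinel), the suffix chain ordering holds: if the locus of suffix T_i is a branching node (T_i is right-branching), then the locus of T_{i+1} is also a branching node. Equivalently: if suffix T_i is branching in T then suffix T_{i+1} is branching in T. -/
variable {α : Type*} [DecidableEq α]

/-- Suffix chain ordering: if the suffix `T_i = T[i..n]` is branching in `T`, then the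
suffix `T_{i+1}` is also branching in `T`. -/
theorem branching_suffix_chain (T : List α) (i : ℕ) (hi : i < T.length)
    (hb : Branching T (T.drop i)) : Branching T (T.drop (i + 1)) := by
  obtain ⟨y, z, hyz, hy, hz⟩ := hb
  have key : ∀ c : α, 1 ≤ occ T (T.drop i ++ [c]) → 1 ≤ occ T (T.drop (i+1) ++ [c]) := by
    intro c h
    rw [occ, Finset.one_le_card] at h ⊢
    obtain ⟨j, hj⟩ := Finset.Nonempty.exists_mem h
    simp only [Finset.mem_filter, Finset.mem_range] at hj
    obtain ⟨hjlen, hpre⟩ := hj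
    rw [List.drop_eq_getElem_cons hi, List.drop_eq_getElem_cons hjlen,
      List.cons_append] at hpre
    obtain ⟨heq, hpre'⟩ := List.cons_prefix_cons.mp hpre
    have hlen := hpre'.length_le
    simp only [List.length_append, List.length_drop, List.length_singleton] at hlen
    refine ⟨j + 1, Finset.mem_filter.mpr ⟨Finset.mem_range.mpr ?_, hpre'⟩⟩
    omega
  exact ⟨y, z, hyz, key y hy, key z hz⟩
end

section
/- There are at most n distinct strings with positive net frequency in a text T of length n. -/
variable {α : Type*} [DecidableEq α]

lemma occ_le_of_prefix (T : List α) {P S : List α} (h : P <+: S) :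
    occ T S ≤ occ T P := by
  unfold occ
  apply Finset.card_le_card
  intro i hi
  simp only [Finset.mem_filter, Finset.mem_range] at *
  exact ⟨hi.1, h.trans hi.2⟩

lemma netOcc_aux {T S S' : List α} {i : ℕ}
    (hS : IsNetOcc T S i) (hS' : IsNetOcc T S' i) (hlt : S.length < S'.length) : False := by
  obtain ⟨hpre, hlen, hocc2, _, hright⟩ := hS
  obtain ⟨hpre', hlen', hocc2', _, _⟩ := hS'
  rcases hright with h | h
  · omega
  · have hP : (T.drop i).take (S.length + 1) <+: S' := by
      obtain ⟨t, ht⟩ := hpre'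
      rw [← ht, List.take_append]
      have h0 : S.length + 1 - S'.length = 0 := by omega
      rw [h0, List.take_zero, List.append_nil]
      exact List.take_prefix _ _
    have := occ_le_of_prefix T hP
    omega

lemma netOcc_unique {T S S' : List α} {i : ℕ}
    (hS : IsNetOcc T S i) (hS' : IsNetOcc T S' i) : S = S' := by
  rcases List.prefix_or_prefix_of_prefix hS.1 hS'.1 with h | h
  · rcases lt_or_eq_of_le h.length_le with hlt | heq
    · exact absurd (netOcc_aux hS hS' hlt) (not_false)
    · exact List.IsPrefix.eq_of_length h heq
  · rcases lt_or_eq_of_le h.length_le with hlt | heq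
    · exact absurd (netOcc_aux hS' hS hlt) (not_false)
    · exact (List.IsPrefix.eq_of_length h heq).symm

/-- There are at most `n` distinct strings with positive net frequency in a text of
length `n`. -/
theorem card_pos_netFreq_le_length (T : List α) :
    {S : List α | 0 < netFreq T S}.Finite ∧
      {S : List α | 0 < netFreq T S}.ncard ≤ T.length := by
  set s := {S : List α | 0 < netFreq T S} with hs
  set f : List α → ℕ := fun S => sInf {i | i ∈ (Finset.range T.length).filter (IsNetOcc T S)}
    with hf
  have hmem : ∀ S ∈ s, f S ∈ (Finset.range T.length).filter (IsNetOcc T S) := by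
    intro S hS
    have hne : {i | i ∈ (Finset.range T.length).filter (IsNetOcc T S)}.Nonempty := by
      have : ((Finset.range T.length).filter (IsNetOcc T S)).Nonempty :=
        Finset.card_pos.mp hS
      exact this
    exact Nat.sInf_mem hne
  have hinj : Set.InjOn f s := by
    intro S hS S' hS' heq
    have h1 := hmem S hS; have h2 := hmem S' hS'
    rw [heq] at h1
    simp only [Finset.mem_filter] at h1 h2
    exact netOcc_unique h1.2 h2.2
  have himg : f '' s ⊆ Set.Iio T.length := by
    rintro _ ⟨S, hS, rfl⟩
    have := hmem S hS
    simp only [Finset.mem_filter, Finset.mem_range] at this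
    exact this.1
  have hfin : s.Finite := Set.Finite.of_finite_image ((Set.finite_Iio _).subset himg) hinj
  refine ⟨hfin, ?_⟩
  calc s.ncard = (f '' s).ncard := (Set.ncard_image_of_injOn hinj).symm
    _ ≤ (Set.Iio T.length).ncard := Set.ncard_le_ncard himg (Set.finite_Iio _)
    _ = T.length := by rw [← Finset.coe_range, Set.ncard_coe_finset, Finset.card_range]
end
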